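/- Let ω be a factor of the period-doubling sequence D, let E = Env(ω), and let E = μ_1 ω μ_2 be the factorization given by the unique occurrence of ω in E. Then for every p ≥ 1 the p-th occurrence of E in D contains the p-th occurrence of ω with the same offset: L(ω,p) = L(E,p) + |μ_1|; equivalently, Env(ω_p) = Env(ω)_p for all p ≥ 1. -/

import Mathlib

/-- The alphabet: letters a, b (for the period-doubling sequence) and c (used by Θ₂). -/
inductive Letter : Type
  | a | b | c
deriving DecidableEq, Repr

open Letter

/-- The period-doubling substitution σ : a ↦ ab, b ↦ aa, extended to words
(the extra letter c is left untouched; it is never produced). -/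
def sigmaw : List Letter → List Letter :=
  fun w => w.flatMap fun x => match x with
    | .a => [.a, .b]
    | .b => [.a, .a]
    | .c => [.c]

/-- A_m = σ^m(a). -/
def A (m : ℕ) : List Letter := sigmaw^[m] [.a]

/-- B_m = σ^m(b). -/
def B (m : ℕ) : List Letter := sigmaw^[m] [.b]

/-- δ_m, the last letter of A_m. -/
def delta (m : ℕ) : Letter := (A m).getLastD .a

/-- The period-doubling sequence D, as a function giving its (n+1)-st letter
(0-indexed); it is the fixed point of σ beginning with a, and A_{n+1} is a
prefix of it of length 2^{n+1} > n. -/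
def D (n : ℕ) : Letter := (A (n + 1)).getD n .a

/-- The finite segment D[i .. i+len−1] of the period-doubling sequence,
with 1-based starting position i. -/
def Dseg (i len : ℕ) : List Letter := (List.range len).map fun k => D (i - 1 + k)

/-- u occurs in the finite word w at (1-based) position i. -/
def OccursAt {α : Type*} (u w : List α) (i : ℕ) : Prop :=
  1 ≤ i ∧ i - 1 + u.length ≤ w.length ∧ (w.drop (i - 1)).take u.length = u

/-- u is a factor of the finite word w. -/
def IsFactor {α : Type*} (u w : List α) : Prop := ∃ i, OccursAt u w i

/-- u occurs in the period-doubling sequence D at (1-based) position i. -/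
def DOccursAt (u : List Letter) (i : ℕ) : Prop := 1 ≤ i ∧ Dseg i u.length = u

/-- u is a factor of the period-doubling sequence D. -/
def FactorD (u : List Letter) : Prop := ∃ i, DOccursAt u i

/-- L(u,p): the starting position of the p-th occurrence (p ≥ 1) of u in D. -/
noncomputable def L (u : List Letter) (p : ℕ) : ℕ := Nat.nth (DOccursAt u) (p - 1)

/-- r_p(u): the p-th return word of u (p ≥ 1), i.e. D[L(u,p) .. L(u,p+1)−1];
r_0(u) is the prefix of D preceding the first occurrence of u. -/
noncomputable def r (u : List Letter) (p : ℕ) : List Letter :=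
  if p = 0 then Dseg 1 (L u 1 - 1) else Dseg (L u p) (L u (p + 1) - L u p)

/-- The morphism τ₁ : a ↦ a, b ↦ bb, extended to words. -/
def tau1 : List Letter → List Letter :=
  fun w => w.flatMap fun x => match x with
    | .a => [.a]
    | .b => [.b, .b]
    | .c => [.c]

/-- The morphism τ₂ : a ↦ ab, b ↦ acac, extended to words. -/
def tau2 : List Letter → List Letter :=
  fun w => w.flatMap fun x => match x with
    | .a => [.a, .b]
    | .b => [.a, .c, .a, .c]
    | .c => [.c]

/-- Θ₁[p], the p-th letter (p ≥ 1) of Θ₁ = τ₁(D): since |τ₁(w)| ≥ |w|, the p-th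
letter of Θ₁ is the p-th letter of the image of the length-p prefix of D. -/
def Theta1 (p : ℕ) : Letter := (tau1 (Dseg 1 p)).getD (p - 1) .a

/-- Θ₂[p], the p-th letter (p ≥ 1) of Θ₂ = τ₂(D). -/
def Theta2 (p : ℕ) : Letter := (tau2 (Dseg 1 p)).getD (p - 1) .a

/-- The envelope word E_{1,m} = A_m with its last letter δ_m deleted. -/
def E1 (m : ℕ) : List Letter := (A m).dropLast

/-- The envelope word E_{2,m} = B_m B_{m−1} with its last letter δ_m deleted. -/
def E2 (m : ℕ) : List Letter := (B m ++ B (m - 1)).dropLast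

/-- Enumeration of the envelope words in the order
E_{1,1} ⊏ E_{2,1} ⊏ E_{1,2} ⊏ E_{2,2} ⊏ …. -/
def Eword (k : ℕ) : List Letter := if k % 2 = 0 then E1 (k / 2 + 1) else E2 (k / 2 + 1)

/-- Env(u): the ⊏-least envelope word having u as a factor. -/
noncomputable def Env (u : List Letter) : List Letter :=
  Eword (sInf {k | IsFactor u (Eword k)})

/-- The letterwise complement exchanging a and b. -/
def comp : Letter → Letter
  | .a => .b
  | .b => .a
  | .c => .c

/-!
Both kinds of envelope words are iterated images of a seed under `u ↦ σ(u) a`: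
`E_{1,e+1}` of `a` and `E_{2,e+1}` of `aa`. As `σ(u) a` occurs in `D` exactly at the doubles
of the occurrences of `u`, the occurrences of `E_{1,e+1}` (resp. `E_{2,e+1}`) are `2^e` times
those of `a` (resp. `aa`).

Adding the letters of `ω` one at a time on the left, the occurrences of `ω` are always those of
a single envelope word `E` shifted by a fixed offset `c`, with `ω` inside `E` at `c`: for
`c > 0` the new letter is forced by `E`; for `c = 0` it sits at the end of a `2^e`-block of `D`,
which is read off from the block's index, and the new occurrence set is again a shifted
occurrence set of a larger envelope word.

Finally, a translate of the occurrence set of an envelope word never lies inside a translate of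
that of a later one, nor inside a different translate of its own (`D` has no nontrivial shift
symmetry, and `aa` only occurs at positions `≡ 2, 3 mod 4`). Hence `E` is the least envelope word
containing `ω`, `ω` occurs in it only at `c`, and the occurrences of `ω` and of `E` in `D` are
matched in order with offset `c`.
-/

namespace PeriodDoubling

/-! ### The substitution and the sequence `D` -/

lemma comp_involutive : Function.Involutive comp := by
  intro x; cases x <;> rfl

lemma comp_iterate_involutive (e : ℕ) : Function.Involutive comp^[e] := by
  rcases Nat.even_or_odd e with he | he
  · rw [comp_involutive.iterate_even he]; exact fun _ => rfl
  · rw [comp_involutive.iterate_odd he]; exact comp_involutive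

lemma comp_iterate_ne_c {y : Letter} (hy : y ≠ c) (e : ℕ) : comp^[e] y ≠ c := by
  rcases Nat.even_or_odd e with he | he
  · rwa [comp_involutive.iterate_even he]
  · rw [comp_involutive.iterate_odd he]; cases y <;> simp_all [comp]

lemma sigmaw_append (u v : List Letter) : sigmaw (u ++ v) = sigmaw u ++ sigmaw v := by
  simp [sigmaw]

lemma sigmaw_singleton {x : Letter} (hx : x ≠ c) : sigmaw [x] = [a, comp x] := by
  cases x <;> simp_all [sigmaw, comp]

lemma c_not_mem_sigmaw {w : List Letter} (hw : c ∉ w) : c ∉ sigmaw w := by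
  simp only [sigmaw, List.mem_flatMap, not_exists, not_and]
  intro x hx
  cases x <;> simp_all

lemma length_sigmaw {w : List Letter} (hw : c ∉ w) : (sigmaw w).length = 2 * w.length := by
  induction w with
  | nil => rfl
  | cons x w ih =>
    rw [← List.singleton_append, sigmaw_append, sigmaw_singleton (by grind)]
    simp only [List.cons_append, List.nil_append, List.length_cons, ih (by grind)]
    ring

lemma getD_sigmaw {w : List Letter} (hw : c ∉ w) {q : ℕ} (hq : q < w.length) :
    (sigmaw w).getD (2 * q) a = a ∧ (sigmaw w).getD (2 * q + 1) a = comp (w.getD q a) := by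
  induction w generalizing q with
  | nil => simp at hq
  | cons x w ih =>
    rw [← List.singleton_append, sigmaw_append, sigmaw_singleton (by grind)]
    cases q with
    | zero => simp
    | succ q => simpa [Nat.mul_succ] using ih (by grind) (q := q) (by simpa using hq)

lemma c_not_mem_sigmaw_iterate {w : List Letter} (hw : c ∉ w) (m : ℕ) : c ∉ sigmaw^[m] w :=
  Function.Iterate.rec (c ∉ ·) hw (fun _ => c_not_mem_sigmaw) m

lemma length_sigmaw_iterate {w : List Letter} (hw : c ∉ w) (m : ℕ) :
    (sigmaw^[m] w).length = 2 ^ m * w.length := by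
  induction m with
  | zero => simp
  | succ m ih =>
    rw [Function.iterate_succ_apply', length_sigmaw (c_not_mem_sigmaw_iterate hw m), ih, pow_succ]
    ring

lemma c_not_mem_A (m : ℕ) : c ∉ A m := c_not_mem_sigmaw_iterate (by simp) m

lemma c_not_mem_B (m : ℕ) : c ∉ B m := c_not_mem_sigmaw_iterate (by simp) m

lemma length_A (m : ℕ) : (A m).length = 2 ^ m :=
  (length_sigmaw_iterate (w := [a]) (by simp) m).trans (mul_one _)

lemma length_B (m : ℕ) : (B m).length = 2 ^ m :=
  (length_sigmaw_iterate (w := [b]) (by simp) m).trans (mul_one _)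

lemma A_succ (m : ℕ) : A (m + 1) = sigmaw (A m) :=
  Function.iterate_succ_apply' sigmaw m [a]

lemma B_succ (m : ℕ) : B (m + 1) = sigmaw (B m) :=
  Function.iterate_succ_apply' sigmaw m [b]

lemma A_prefix_A_succ (m : ℕ) : A m <+: A (m + 1) := by
  induction m with
  | zero => exact ⟨[b], rfl⟩
  | succ m ih =>
    obtain ⟨t, ht⟩ := ih
    exact ⟨sigmaw t, by rw [A_succ (m + 1), ← ht, sigmaw_append, ← A_succ, ht]⟩

lemma A_prefix_of_le {m m' : ℕ} (h : m ≤ m') : A m <+: A m' := by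
  induction m', h using Nat.le_induction with
  | base => exact List.prefix_refl _
  | succ m' _ ih => exact ih.trans (A_prefix_A_succ m')

lemma getD_A_of_le {m m' n : ℕ} (h : m ≤ m') (hn : n < 2 ^ m) :
    (A m).getD n a = (A m').getD n a := by
  obtain ⟨t, ht⟩ := A_prefix_of_le h
  rw [← ht, List.getD_append _ _ _ _ (by rwa [length_A])]

lemma D_eq_getD_A {m n : ℕ} (hn : n < 2 ^ m) : D n = (A m).getD n a := by
  rcases le_total m (n + 1) with h | h
  · exact (getD_A_of_le h hn).symm
  · exact getD_A_of_le h
      (Nat.lt_two_pow_self.trans (Nat.pow_lt_pow_right one_lt_two n.lt_succ_self))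

lemma D_two_mul_and_two_mul_add_one (t : ℕ) : D (2 * t) = a ∧ D (2 * t + 1) = comp (D t) := by
  have ht : t < 2 ^ t := Nat.lt_two_pow_self
  have h := getD_sigmaw (c_not_mem_A t) (q := t) (by rwa [length_A])
  rw [← A_succ] at h
  rw [D_eq_getD_A (m := t + 1) (by rw [pow_succ]; omega),
    D_eq_getD_A (m := t + 1) (by rw [pow_succ]; omega), D_eq_getD_A ht]
  exact h

@[simp] lemma D_two_mul (t : ℕ) : D (2 * t) = a := (D_two_mul_and_two_mul_add_one t).1

@[simp] lemma D_two_mul_add_one (t : ℕ) : D (2 * t + 1) = comp (D t) :=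
  (D_two_mul_and_two_mul_add_one t).2

@[simp] lemma D_zero : D 0 = a := D_two_mul 0

lemma D_ne_c (n : ℕ) : D n ≠ c := by
  induction n using Nat.strong_induction_on with
  | _ n ih =>
    obtain ⟨t, rfl | rfl⟩ := Nat.even_or_odd' n
    · simp
    · have := ih t (by omega)
      cases h : D t <;> simp_all [comp]

lemma D_eq_b_iff {s : ℕ} : D s = b ↔ ∃ t, D t = a ∧ s = 2 * t + 1 := by
  obtain ⟨t, rfl | rfl⟩ := Nat.even_or_odd' s
  · simp only [D_two_mul, reduceCtorEq, false_iff, not_exists, not_and]; omega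
  · have := D_ne_c t
    constructor
    · intro h; exact ⟨t, by cases h' : D t <;> simp_all [comp], rfl⟩
    · rintro ⟨t', ht', he⟩
      obtain rfl : t' = t := by omega
      simp [ht', comp]

lemma D_four_mul_add_one (t : ℕ) : D (4 * t + 1) = b := by
  rw [show 4 * t + 1 = 2 * (2 * t) + 1 by ring, D_two_mul_add_one, D_two_mul]; rfl

lemma D_four_mul_add_two (t : ℕ) : D (4 * t + 2) = a := by
  rw [show 4 * t + 2 = 2 * (2 * t + 1) by ring, D_two_mul]

lemma D_four_mul_add_three (t : ℕ) : D (4 * t + 3) = D t := by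
  rw [show 4 * t + 3 = 2 * (2 * t + 1) + 1 by ring, D_two_mul_add_one, D_two_mul_add_one,
    comp_involutive]

lemma D_eq_a_and_succ_eq_a_iff {s : ℕ} :
    D s = a ∧ D (s + 1) = a ↔ (s % 4 = 2 ∨ s % 4 = 3) ∧ D (s / 4) = a := by
  obtain ⟨t, j, hj, rfl⟩ : ∃ t j, j < 4 ∧ s = 4 * t + j :=
    ⟨s / 4, s % 4, by omega, by omega⟩
  have h0 : D (4 * t) = a := by rw [show 4 * t = 2 * (2 * t) by ring, D_two_mul]
  have h4 : D (4 * t + 3 + 1) = a := by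
    rw [show 4 * t + 3 + 1 = 2 * (2 * (t + 1)) by ring, D_two_mul]
  have hdiv : (4 * t + j) / 4 = t := by omega
  interval_cases j <;>
    simp [h0, h4, hdiv, D_four_mul_add_one, D_four_mul_add_two, D_four_mul_add_three, Nat.add_mod]

lemma D_eq_b_and_succ_eq_a_iff {s : ℕ} :
    D s = b ∧ D (s + 1) = a ↔ ∃ t, D t = a ∧ s = 2 ^ 1 * t + 1 := by
  rw [pow_one, ← D_eq_b_iff, and_iff_left_iff_imp]
  intro hs
  obtain ⟨t, -, rfl⟩ := D_eq_b_iff.1 hs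
  rw [show 2 * t + 1 + 1 = 2 * (t + 1) by ring, D_two_mul]

lemma D_eq_and_aa_succ_iff {x : Letter} {s : ℕ} (hx : x = a ∨ x = b) :
    D s = x ∧ (D (s + 1) = a ∧ D (s + 1 + 1) = a) ↔
      ∃ t, D t = a ∧ s = 2 ^ 2 * t + (if x = a then 2 else 1) := by
  rw [D_eq_a_and_succ_eq_a_iff]
  constructor
  · rintro ⟨hs, hmod, ht⟩
    obtain ⟨t, j, hj, rfl⟩ : ∃ t j, (j = 1 ∨ j = 2) ∧ s = 4 * t + j :=
      ⟨s / 4, s % 4, by omega, by omega⟩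
    refine ⟨t, by rwa [show (4 * t + j + 1) / 4 = t by omega] at ht, ?_⟩
    rcases hj with rfl | rfl <;> rcases hx with rfl | rfl <;>
      simp_all [D_four_mul_add_one, D_four_mul_add_two]
  · rintro ⟨t, ht, rfl⟩
    rcases hx with rfl | rfl
    · simp only [Nat.reducePow, ↓reduceIte, D_four_mul_add_two, ht, true_and,
        show (4 * t + 2 + 1) / 4 = t by omega, and_true]
      omega
    · simp only [Nat.reducePow, reduceCtorEq, ↓reduceIte, D_four_mul_add_one, ht, true_and,
        show (4 * t + 1 + 1) / 4 = t by omega, and_true]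
      omega

lemma D_pow_mul_add_pred (e s : ℕ) : D (2 ^ e * s + (2 ^ e - 1)) = comp^[e] (D s) := by
  induction e with
  | zero => simp
  | succ e ih =>
    have : 2 ^ (e + 1) * s + (2 ^ (e + 1) - 1) = 2 * (2 ^ e * s + (2 ^ e - 1)) + 1 := by
      have := Nat.one_le_two_pow (n := e)
      rw [pow_succ, mul_comm (2 ^ e) 2, mul_assoc]; omega
    rw [this, D_two_mul_add_one, ih, Function.iterate_succ_apply']

lemma eq_zero_of_forall_D_shift {x : Letter} (hx : x ≠ c) {δ : ℕ}
    (h : ∀ t, D t = x → D (t + δ) = x) : δ = 0 := by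
  induction δ using Nat.strong_induction_on generalizing x with
  | _ δ ih =>
    obtain ⟨d, rfl | rfl⟩ := Nat.even_or_odd' δ
    · rcases Nat.eq_zero_or_pos d with rfl | hd
      · rfl
      suffices d = 0 by omega
      refine ih d (by omega) (x := comp x) (by cases x <;> simp_all [comp]) fun t ht => ?_
      have := h (2 * t + 1) (by rw [D_two_mul_add_one, ht, comp_involutive])
      rw [show 2 * t + 1 + 2 * d = 2 * (t + d) + 1 by ring, D_two_mul_add_one] at this
      rw [← this, comp_involutive]
    · exfalso
      cases x
      · have := h (2 * d) (D_two_mul d)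
        rw [show 2 * d + (2 * d + 1) = 2 * (2 * d) + 1 by ring] at this
        simp [comp] at this
      · have := h 1 (by simpa [comp] using D_two_mul_add_one 0)
        rw [show 1 + (2 * d + 1) = 2 * (d + 1) by ring] at this
        simp at this
      · exact hx rfl

/-! ### Occurrences in `D` and the envelope recursion -/

/-- The 0-based counterpart of `DOccursAt`: `dOcc u j ↔ DOccursAt u (j + 1)`. -/
def dOcc (u : List Letter) (j : ℕ) : Prop := ∀ l < u.length, D (j + l) = u.getD l a

@[simp] lemma dOcc_nil (j : ℕ) : dOcc [] j := fun _ hl => absurd hl (Nat.not_lt_zero _)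

lemma dOcc_cons {y : Letter} {u : List Letter} {j : ℕ} :
    dOcc (y :: u) j ↔ D j = y ∧ dOcc u (j + 1) := by
  constructor
  · intro h
    refine ⟨by simpa using h 0 (by simp), fun l hl => ?_⟩
    simpa [Nat.add_right_comm _ 1 l, Nat.add_assoc] using h (l + 1) (by simpa using hl)
  · rintro ⟨h0, h⟩ (_ | l) hl
    · simpa using h0
    · simpa [Nat.add_right_comm _ 1 l, Nat.add_assoc] using h l (by simpa using hl)

@[simp] lemma dOcc_singleton {y : Letter} {j : ℕ} : dOcc [y] j ↔ D j = y := by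
  simp [dOcc_cons]

lemma dOcc_pair {y z : Letter} {j : ℕ} : dOcc [y, z] j ↔ D j = y ∧ D (j + 1) = z := by
  simp [dOcc_cons]

/-- One step of the envelope recursion `E_{·,m+1} = σ(E_{·,m}) a`. -/
def lift (u : List Letter) : List Letter := sigmaw u ++ [a]

lemma c_not_mem_lift_iterate {u : List Letter} (hu : c ∉ u) (e : ℕ) : c ∉ lift^[e] u :=
  Function.Iterate.rec (c ∉ ·) hu (fun _ hw => by simp [lift, c_not_mem_sigmaw hw]) e

lemma length_lift {u : List Letter} (hu : c ∉ u) : (lift u).length = 2 * u.length + 1 := by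
  simp [lift, length_sigmaw hu]

lemma getD_lift {u : List Letter} (hu : c ∉ u) {q : ℕ} :
    (q ≤ u.length → (lift u).getD (2 * q) a = a) ∧
    (q < u.length → (lift u).getD (2 * q + 1) a = comp (u.getD q a)) := by
  have hlen := length_sigmaw hu
  refine ⟨fun hq => ?_, fun hq => ?_⟩
  · rcases hq.lt_or_eq with hq | rfl
    · rw [lift, List.getD_append _ _ _ _ (by omega)]; exact (getD_sigmaw hu hq).1
    · rw [lift, List.getD_append_right _ _ _ _ (by omega)]; simp [hlen]
  · rw [lift, List.getD_append _ _ _ _ (by omega)]; exact (getD_sigmaw hu hq).2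

/-- An odd occurrence would put `a` at two positions `2s+1`, `2s+3`, i.e. a factor `bb` at `s`. -/
lemma dOcc_lift_iff {u : List Letter} (hu : c ∉ u) (hne : u ≠ []) {i : ℕ} :
    dOcc (lift u) i ↔ ∃ j, dOcc u j ∧ i = 2 * j := by
  have hpos := List.length_pos_iff.2 hne
  have hlen := length_lift hu
  constructor
  · intro h
    obtain ⟨j, rfl | rfl⟩ := Nat.even_or_odd' i
    · refine ⟨j, fun q hq => comp_involutive.injective ?_, rfl⟩
      have := h (2 * q + 1) (by omega)
      rwa [(getD_lift hu).2 hq, show 2 * j + (2 * q + 1) = 2 * (j + q) + 1 by ring,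
        D_two_mul_add_one] at this
    · have h0 := h (2 * 0) (by omega)
      have h2 := h (2 * 1) (by omega)
      rw [(getD_lift hu).1 (by omega)] at h0 h2
      rw [show 2 * j + 1 + 2 * 0 = 2 * j + 1 by ring, D_two_mul_add_one] at h0
      rw [show 2 * j + 1 + 2 * 1 = 2 * (j + 1) + 1 by ring, D_two_mul_add_one] at h2
      have hj : D j = b := (comp_involutive (D j)).symm.trans (congrArg comp h0)
      obtain ⟨t, -, rfl⟩ := D_eq_b_iff.1 hj
      simp [show 2 * t + 1 + 1 = 2 * (t + 1) by ring, comp] at h2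
  · rintro ⟨j, hj, rfl⟩ l hl
    obtain ⟨q, rfl | rfl⟩ := Nat.even_or_odd' l
    · rw [(getD_lift hu).1 (by omega), ← Nat.mul_add, D_two_mul]
    · rw [(getD_lift hu).2 (by omega), show 2 * j + (2 * q + 1) = 2 * (j + q) + 1 by ring,
        D_two_mul_add_one, hj q (by omega)]

lemma dOcc_lift_iterate_iff {u : List Letter} (hu : c ∉ u) (hne : u ≠ []) (e : ℕ) {i : ℕ} :
    dOcc (lift^[e] u) i ↔ ∃ j, dOcc u j ∧ i = 2 ^ e * j := by
  induction e generalizing i with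
  | zero => simp
  | succ e ih =>
    have hne' : lift^[e] u ≠ [] := by
      cases e
      · exact hne
      · rw [Function.iterate_succ_apply']; simp [lift]
    rw [Function.iterate_succ_apply', dOcc_lift_iff (c_not_mem_lift_iterate hu e) hne']
    constructor
    · rintro ⟨j, hj, rfl⟩
      obtain ⟨j', hj', rfl⟩ := ih.1 hj
      exact ⟨j', hj', by ring⟩
    · rintro ⟨j, hj, rfl⟩
      exact ⟨2 ^ e * j, ih.2 ⟨j, hj, rfl⟩, by ring⟩

lemma length_lift_iterate {u : List Letter} (hu : c ∉ u) (e : ℕ) :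
    (lift^[e] u).length + 1 = 2 ^ e * (u.length + 1) := by
  induction e with
  | zero => simp
  | succ e ih =>
    rw [Function.iterate_succ_apply', length_lift (c_not_mem_lift_iterate hu e), pow_succ]
    linarith

lemma dropLast_sigmaw {w : List Letter} (hw : c ∉ w) (hne : w ≠ []) :
    (sigmaw w).dropLast = lift w.dropLast := by
  have hx : w.getLast hne ≠ c := fun h => hw (h ▸ List.getLast_mem hne)
  conv_lhs => rw [← List.dropLast_append_getLast hne]
  rw [sigmaw_append, sigmaw_singleton hx, lift, List.dropLast_append_of_ne_nil (by simp)]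
  rfl

lemma E1_succ_eq (e : ℕ) : E1 (e + 1) = lift^[e] [a] := by
  induction e with
  | zero => rfl
  | succ e ih =>
    have hne : A (e + 1) ≠ [] := by
      rw [← List.length_pos_iff, length_A]; exact Nat.two_pow_pos _
    rw [Function.iterate_succ_apply', ← ih, E1, A_succ, dropLast_sigmaw (c_not_mem_A _) hne]
    rfl

lemma E2_succ_eq (e : ℕ) : E2 (e + 1) = lift^[e] [a, a] := by
  induction e with
  | zero => rfl
  | succ e ih =>
    have h : B (e + 2) ++ B (e + 1) = sigmaw (B (e + 1) ++ B e) := by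
      rw [sigmaw_append, ← B_succ, ← B_succ]
    rw [Function.iterate_succ_apply', ← ih, E2, E2, Nat.add_sub_cancel, Nat.add_sub_cancel, h,
      dropLast_sigmaw (by simp [c_not_mem_B])
        (by simp [← List.length_pos_iff, length_B])]

def seed (k : ℕ) : List Letter := if k % 2 = 0 then [a] else [a, a]

lemma seed_ne_nil (k : ℕ) : seed k ≠ [] := by unfold seed; split_ifs <;> simp

lemma c_not_mem_seed (k : ℕ) : c ∉ seed k := by unfold seed; split_ifs <;> simp

lemma Eword_eq (k : ℕ) : Eword k = lift^[k / 2] (seed k) := by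
  unfold Eword seed
  split_ifs
  · exact E1_succ_eq _
  · exact E2_succ_eq _

lemma dOcc_Eword_iff (k : ℕ) {i : ℕ} :
    dOcc (Eword k) i ↔ ∃ t, dOcc (seed k) t ∧ i = 2 ^ (k / 2) * t := by
  rw [Eword_eq]; exact dOcc_lift_iterate_iff (c_not_mem_seed k) (seed_ne_nil k) _

lemma length_Eword (k : ℕ) : (Eword k).length + 1 = 2 ^ (k / 2) * ((seed k).length + 1) := by
  rw [Eword_eq]; exact length_lift_iterate (c_not_mem_seed k) _

lemma length_Eword_two_mul (e : ℕ) : (Eword (2 * e)).length + 1 = 2 ^ e * 2 := by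
  rw [length_Eword, show 2 * e / 2 = e by omega]; simp [seed]

lemma length_Eword_two_mul_add_one (e : ℕ) : (Eword (2 * e + 1)).length + 1 = 2 ^ e * 3 := by
  rw [length_Eword, show (2 * e + 1) / 2 = e by omega]; simp [seed, Nat.add_mod]

lemma dOcc_seed_two_mul {e t : ℕ} : dOcc (seed (2 * e)) t ↔ D t = a := by
  simp [seed]

lemma dOcc_seed_two_mul_add_one {e t : ℕ} :
    dOcc (seed (2 * e + 1)) t ↔ D t = a ∧ D (t + 1) = a := by
  simp [seed, dOcc_pair, Nat.add_mod]

lemma dOcc_seed_of_D {k t : ℕ} (h : D t = a) (h' : D (t + 1) = a) : dOcc (seed k) t := by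
  unfold seed; split_ifs <;> simp [dOcc_pair, h, h']

lemma dOcc_seed_two (k : ℕ) : dOcc (seed k) 2 := dOcc_seed_of_D (by decide) (by decide)

lemma dOcc_seed_three (k : ℕ) : dOcc (seed k) 3 := dOcc_seed_of_D (by decide) (by decide)

/-! ### Rigidity of translated occurrence sets -/

lemma shift_eq_zero_of_forall_dOcc_seed {k δ : ℕ}
    (h : ∀ t, dOcc (seed k) t → dOcc (seed k) (t + δ)) : δ = 0 := by
  obtain ⟨e, rfl | rfl⟩ := Nat.even_or_odd' k
  · simp only [dOcc_seed_two_mul] at h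
    exact eq_zero_of_forall_D_shift (by decide) h
  · simp only [dOcc_seed_two_mul_add_one, D_eq_a_and_succ_eq_a_iff] at h
    have h2 := (h 2 ⟨by omega, D_zero⟩).1
    have h3 := (h 3 ⟨by omega, D_zero⟩).1
    obtain ⟨d, rfl⟩ : ∃ d, δ = 4 * d := ⟨δ / 4, by omega⟩
    suffices d = 0 by omega
    refine eq_zero_of_forall_D_shift (x := a) (by decide) fun t ht => ?_
    have := (h (4 * t + 2) ⟨by omega, by rwa [show (4 * t + 2) / 4 = t by omega]⟩).2
    rwa [show (4 * t + 2 + 4 * d) / 4 = t + d by omega] at this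

/-- Translating the occurrences of `Eword k` by `q` lands in those of `Eword K` translated by
`c`, stated through `dOcc_Eword_iff`. -/
def SeedTranslate (k K q c : ℕ) : Prop :=
  ∀ t, dOcc (seed k) t → ∃ t', dOcc (seed K) t' ∧ 2 ^ (k / 2) * t + q = 2 ^ (K / 2) * t' + c

/-- The occurrences `2, 3` of `seed k` force `2 ^ (K / 2) ∣ 2 ^ (k / 2)`; for `K = k + 1`
the occurrences `2, 3, 4` of `seed k = a` would give three consecutive occurrences of `aa`,
which only occurs at positions `≡ 2, 3 mod 4`. -/
lemma SeedTranslate.le {k K q c : ℕ} (h : SeedTranslate k K q c) : K ≤ k := by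
  obtain ⟨t2, h2', h2⟩ := h 2 (dOcc_seed_two k)
  obtain ⟨t3, h3', h3⟩ := h 3 (dOcc_seed_three k)
  have hstep : 2 ^ (K / 2) * t3 = 2 ^ (K / 2) * t2 + 2 ^ (k / 2) := by linarith
  have hdvd : 2 ^ (K / 2) ∣ 2 ^ (k / 2) :=
    (Nat.dvd_add_right (dvd_mul_right _ t2)).1 (hstep ▸ dvd_mul_right _ t3)
  have hle := (Nat.pow_dvd_pow_iff_le_right one_lt_two).1 hdvd
  by_contra hlt
  obtain ⟨e, rfl⟩ : ∃ e, k = 2 * e := ⟨k / 2, by omega⟩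
  obtain rfl : K = 2 * e + 1 := by omega
  obtain ⟨t4, h4', h4⟩ := h 4 (dOcc_seed_two_mul.2 (by decide))
  rw [show (2 * e + 1) / 2 = e by omega, show 2 * e / 2 = e by omega] at h2 h3 h4
  have hpos := Nat.two_pow_pos e
  have h3 : t3 = t2 + 1 := Nat.eq_of_mul_eq_mul_left hpos (by linarith)
  have h4 : t4 = t2 + 2 := Nat.eq_of_mul_eq_mul_left hpos (by linarith)
  simp only [dOcc_seed_two_mul_add_one, D_eq_a_and_succ_eq_a_iff] at h2' h3' h4'
  omega

/-- Comparing the least occurrence `m` of `seed k` with its image shows that `q - c` is a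
multiple `2 ^ (k / 2) * δ` with the occurrences of `seed k` invariant under translation
by `δ`. -/
lemma SeedTranslate.eq {k q c : ℕ} (h : SeedTranslate k k q c) : q = c := by
  obtain ⟨m, hm, hmin⟩ : ∃ m, dOcc (seed k) m ∧ ∀ t, dOcc (seed k) t → m ≤ t :=
    ⟨_, Nat.sInf_mem (s := {t | dOcc (seed k) t}) ⟨2, dOcc_seed_two k⟩,
      fun _ ht => Nat.sInf_le ht⟩
  obtain ⟨t', ht', he⟩ := h m hm
  obtain ⟨δ, rfl⟩ := Nat.exists_eq_add_of_le (hmin t' ht')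
  suffices δ = 0 by subst this; linarith
  refine shift_eq_zero_of_forall_dOcc_seed (k := k) fun t ht => ?_
  obtain ⟨t'', ht'', he'⟩ := h t ht
  convert ht''
  apply Nat.eq_of_mul_eq_mul_left (Nat.two_pow_pos (k / 2))
  linarith

/-! ### Envelopes -/

def IsEnvelope (ω : List Letter) (k c : ℕ) : Prop :=
  c + ω.length ≤ (Eword k).length ∧ ∀ i, dOcc ω i ↔ ∃ j, dOcc (Eword k) j ∧ i = j + c

lemma isEnvelope_a : IsEnvelope [a] 0 0 :=
  ⟨by decide, fun i => by simp [show Eword 0 = [a] from rfl]⟩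

lemma isEnvelope_b : IsEnvelope [b] 2 1 := by
  refine ⟨by decide, fun i => ?_⟩
  simp only [dOcc_singleton, D_eq_b_iff, dOcc_Eword_iff, show seed 2 = [a] from rfl]
  constructor
  · rintro ⟨t, ht, rfl⟩; exact ⟨_, ⟨t, ht, rfl⟩, by ring⟩
  · rintro ⟨_, ⟨t, ht, rfl⟩, rfl⟩; exact ⟨t, ht, by ring⟩

lemma IsEnvelope.cons_of_offset_succ {u : List Letter} {k c : ℕ} (h : IsEnvelope u k (c + 1))
    {y : Letter} (hy : ∃ i, dOcc (y :: u) i) : IsEnvelope (y :: u) k c := by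
  obtain ⟨hfit, hocc⟩ := h
  have hc : c < (Eword k).length := by omega
  have hletter : ∀ j, dOcc (Eword k) j → D (j + c) = y := by
    obtain ⟨i, hi⟩ := hy
    obtain ⟨hiy, hiu⟩ := dOcc_cons.1 hi
    obtain ⟨j₀, hj₀, hij₀⟩ := (hocc _).1 hiu
    intro j hj
    rw [hj c hc, ← hj₀ c hc, ← hiy]
    congr 1; omega
  refine ⟨by simp only [List.length_cons]; omega, fun i => ?_⟩
  rw [dOcc_cons, hocc]
  constructor
  · rintro ⟨-, j, hj, hij⟩; exact ⟨j, hj, by omega⟩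
  · rintro ⟨j, hj, rfl⟩; exact ⟨hletter j hj, j, hj, by omega⟩

/-- A letter in front of an occurrence at `2 ^ e * (s + 1)` sits at the last position of the
`2 ^ e`-block of `s`, where `D` is `comp^[e] (D s)`. -/
lemma dOcc_cons_iff_of_pow_mul {u : List Letter} {X : ℕ → Prop} {e : ℕ} (y : Letter)
    (hu : ∀ i, dOcc u i ↔ ∃ j, X j ∧ i = 2 ^ e * j) (i : ℕ) :
    dOcc (y :: u) i ↔
      ∃ s, (D s = comp^[e] y ∧ X (s + 1)) ∧ i = 2 ^ e * s + (2 ^ e - 1) := by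
  have hpos := Nat.one_le_two_pow (n := e)
  rw [dOcc_cons, hu]
  constructor
  · rintro ⟨hi, j, hj, hij⟩
    obtain ⟨s, rfl⟩ : ∃ s, j = s + 1 := ⟨j - 1, by rcases j with _ | j <;> simp at hij ⊢⟩
    have hi' : i = 2 ^ e * s + (2 ^ e - 1) := by rw [Nat.mul_succ] at hij; omega
    refine ⟨s, ⟨?_, hj⟩, hi'⟩
    rw [← hi, hi', D_pow_mul_add_pred, comp_iterate_involutive]
  · rintro ⟨s, ⟨hs, hX⟩, rfl⟩
    refine ⟨by rw [D_pow_mul_add_pred, hs, comp_iterate_involutive], s + 1, hX, ?_⟩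
    rw [Nat.mul_succ]; omega

lemma isEnvelope_of_reindex {ω : List Letter} {Z : ℕ → Prop} {k e d r : ℕ}
    (hk : k / 2 = e + d)
    (hocc : ∀ i, dOcc ω i ↔ ∃ s, Z s ∧ i = 2 ^ e * s + (2 ^ e - 1))
    (hZ : ∀ s, Z s ↔ ∃ t, dOcc (seed k) t ∧ s = 2 ^ d * t + r)
    (hfit : 2 ^ e * r + (2 ^ e - 1) + ω.length ≤ (Eword k).length) :
    IsEnvelope ω k (2 ^ e * r + (2 ^ e - 1)) := by
  refine ⟨hfit, fun i => ?_⟩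
  simp only [hocc, hZ, dOcc_Eword_iff, hk, pow_add]
  constructor
  · rintro ⟨s, ⟨t, ht, rfl⟩, rfl⟩; exact ⟨_, ⟨t, ht, rfl⟩, by ring⟩
  · rintro ⟨_, ⟨t, ht, rfl⟩, rfl⟩; exact ⟨_, ⟨t, ht, rfl⟩, by ring⟩

lemma IsEnvelope.exists_cons_of_offset_zero {u : List Letter} {k : ℕ} (h : IsEnvelope u k 0)
    {y : Letter} (hy : y ≠ c) : ∃ k' c', IsEnvelope (y :: u) k' c' := by
  have hocc := dOcc_cons_iff_of_pow_mul y (X := dOcc (seed k)) (e := k / 2)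
    fun i => by simpa [dOcc_Eword_iff] using h.2 i
  have hlen : u.length + 1 ≤ (Eword k).length + 1 := by have := h.1; omega
  have hx : comp^[k / 2] y = a ∨ comp^[k / 2] y = b := by
    have := comp_iterate_ne_c hy (k / 2); revert this; cases comp^[k / 2] y <;> simp
  obtain ⟨e, rfl | rfl⟩ := Nat.even_or_odd' k
  · rw [show 2 * e / 2 = e by omega] at hocc hx
    rw [length_Eword_two_mul] at hlen
    simp only [dOcc_seed_two_mul] at hocc
    rcases hx with hx | hx <;> rw [hx] at hocc
    · refine ⟨2 * e + 1, _, isEnvelope_of_reindex (d := 0) (r := 0) (by omega) hocc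
        (fun s => by simp [dOcc_seed_two_mul_add_one]) ?_⟩
      have := length_Eword_two_mul_add_one e
      simp only [List.length_cons]; omega
    · refine ⟨2 * (e + 1), _, isEnvelope_of_reindex (d := 1) (r := 1) (by omega) hocc
        (fun s => by simpa [dOcc_seed_two_mul] using D_eq_b_and_succ_eq_a_iff) ?_⟩
      have := length_Eword_two_mul (e + 1)
      rw [pow_succ] at this
      simp only [List.length_cons]; omega
  · rw [show (2 * e + 1) / 2 = e by omega] at hocc hx
    rw [length_Eword_two_mul_add_one] at hlen
    simp only [dOcc_seed_two_mul_add_one] at hocc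
    have := length_Eword_two_mul (e + 2)
    rw [pow_add] at this
    refine ⟨2 * (e + 2), _, isEnvelope_of_reindex (d := 2) (by omega) hocc
      (fun s => by simpa [dOcc_seed_two_mul] using D_eq_and_aa_succ_iff hx) ?_⟩
    simp only [List.length_cons]
    rcases hx with hx | hx <;> simp only [hx, reduceCtorEq, ↓reduceIte, mul_one] <;> omega

lemma exists_isEnvelope {ω : List Letter} (hne : ω ≠ []) (hocc : ∃ i, dOcc ω i) :
    ∃ k c, IsEnvelope ω k c := by
  induction ω with
  | nil => exact absurd rfl hne
  | cons y u ih =>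
    obtain ⟨i, hi⟩ := hocc
    obtain ⟨hiy, hiu⟩ := dOcc_cons.1 hi
    by_cases hu : u = []
    · subst hu
      cases y
      · exact ⟨0, 0, isEnvelope_a⟩
      · exact ⟨2, 1, isEnvelope_b⟩
      · exact absurd hiy (D_ne_c i)
    · obtain ⟨k, _ | c, h⟩ := ih hu ⟨i + 1, hiu⟩
      · exact h.exists_cons_of_offset_zero (hiy ▸ D_ne_c i)
      · exact ⟨k, c, h.cons_of_offset_succ ⟨i, hi⟩⟩

/-! ### Positions in words and in `D` -/

lemma occursAt_succ_iff {u w : List Letter} {q : ℕ} :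
    OccursAt u w (q + 1) ↔
      q + u.length ≤ w.length ∧ ∀ l < u.length, w.getD (q + l) a = u.getD l a := by
  simp only [OccursAt, Nat.add_sub_cancel, le_add_iff_nonneg_left, zero_le, true_and]
  refine and_congr_right fun hlen => ⟨fun h l hl => ?_, fun h => ?_⟩
  · rw [← h]; simp [List.getD_eq_getElem?_getD, hl]
  · apply List.ext_getElem (by simp only [List.length_take, List.length_drop]; omega)
    intro l _ hl
    have := h l hl
    rw [List.getD_eq_getElem _ _ hl, List.getD_eq_getElem _ _ (by omega)] at this
    simp [this]

lemma dOcc_of_occursAt {u w : List Letter} {j q : ℕ} (hw : dOcc w j)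
    (h : OccursAt u w (q + 1)) : dOcc u (j + q) := by
  obtain ⟨hlen, hlet⟩ := occursAt_succ_iff.1 h
  intro l hl
  rw [Nat.add_assoc, hw (q + l) (by omega), hlet l hl]

lemma occursAt_of_dOcc {u w : List Letter} {j q : ℕ} (hw : dOcc w j) (hu : dOcc u (j + q))
    (hlen : q + u.length ≤ w.length) : OccursAt u w (q + 1) :=
  occursAt_succ_iff.2
    ⟨hlen, fun l hl => by rw [← hw (q + l) (by omega), ← hu l hl, Nat.add_assoc]⟩

lemma occursAt_middle (μ₁ ω μ₂ : List Letter) :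
    OccursAt ω (μ₁ ++ ω ++ μ₂) (μ₁.length + 1) := by
  simp [OccursAt]

lemma DOccursAt_succ_iff {u : List Letter} {j : ℕ} : DOccursAt u (j + 1) ↔ dOcc u j := by
  simp only [DOccursAt, Dseg, Nat.add_sub_cancel, le_add_iff_nonneg_left, zero_le, true_and]
  refine ⟨fun h l hl => ?_, fun h => List.ext_getElem (by simp) fun l _ hl => ?_⟩
  · rw [← h]; simp [List.getD_eq_getElem?_getD, hl]
  · rw [List.getElem_map, List.getElem_range, h l hl, List.getD_eq_getElem _ _ hl]

section Envelope

variable {ω : List Letter} {k c : ℕ}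

lemma IsEnvelope.occursAt (h : IsEnvelope ω k c) :
    OccursAt ω (Eword k) (c + 1) := by
  have hE : dOcc (Eword k) (2 ^ (k / 2) * 2) := (dOcc_Eword_iff k).2 ⟨2, dOcc_seed_two k, rfl⟩
  exact occursAt_of_dOcc hE ((h.2 _).2 ⟨_, hE, rfl⟩) h.1

lemma IsEnvelope.seedTranslate {K q : ℕ} (h : IsEnvelope ω K c)
    (hq : OccursAt ω (Eword k) (q + 1)) : SeedTranslate k K q c := by
  intro t ht
  have hE := (dOcc_Eword_iff k).2 ⟨t, ht, rfl⟩
  obtain ⟨j, hj, hje⟩ := (h.2 _).1 (dOcc_of_occursAt hE hq)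
  obtain ⟨t', ht', rfl⟩ := (dOcc_Eword_iff K).1 hj
  exact ⟨t', ht', hje⟩

lemma IsEnvelope.env_eq (h : IsEnvelope ω k c) : Env ω = Eword k := by
  suffices IsLeast {k' | IsFactor ω (Eword k')} k by rw [Env, this.csInf_eq]
  refine ⟨⟨c + 1, h.occursAt⟩, fun k' ⟨i, hi⟩ => ?_⟩
  obtain ⟨q, rfl⟩ : ∃ q, i = q + 1 := ⟨i - 1, by have := hi.1; omega⟩
  exact (h.seedTranslate hi).le

lemma IsEnvelope.eq_of_occursAt {q : ℕ} (h : IsEnvelope ω k c)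
    (hq : OccursAt ω (Eword k) (q + 1)) : q = c :=
  (h.seedTranslate hq).eq

lemma IsEnvelope.DOccursAt_add_iff (h : IsEnvelope ω k c) (i : ℕ) :
    DOccursAt ω (i + c) ↔ DOccursAt (Eword k) i := by
  rcases i with _ | i
  · refine iff_of_false (fun hω => ?_) (fun hE => absurd hE.1 (by omega))
    obtain ⟨c, rfl⟩ : ∃ c', c = c' + 1 := ⟨c - 1, by have := hω.1; omega⟩
    obtain ⟨j, -, hj⟩ := (h.2 c).1 (DOccursAt_succ_iff.1 (by simpa using hω))
    omega
  · rw [show i + 1 + c = i + c + 1 by ring, DOccursAt_succ_iff, DOccursAt_succ_iff, h.2]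
    exact ⟨fun ⟨j, hj, he⟩ => (show j = i by omega) ▸ hj, fun hi => ⟨i, hi, rfl⟩⟩

lemma IsEnvelope.infinite_setOf_DOccursAt (h : IsEnvelope ω k c) :
    (Set.ofPred (DOccursAt ω)).Infinite := by
  refine Set.infinite_of_forall_exists_gt fun n => ⟨2 ^ (k / 2) * (8 * n + 2) + 1 + c, ?_, ?_⟩
  · have hseed : dOcc (seed k) (8 * n + 2) := dOcc_seed_of_D
      (by rw [show 8 * n + 2 = 4 * (2 * n) + 2 by ring, D_four_mul_add_two])
      (by rw [show 8 * n + 2 + 1 = 4 * (2 * n) + 3 by ring, D_four_mul_add_three, D_two_mul])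
    exact (h.DOccursAt_add_iff _).2
      (DOccursAt_succ_iff.2 ((dOcc_Eword_iff k).2 ⟨_, hseed, rfl⟩))
  · have := Nat.one_le_two_pow (n := k / 2)
    nlinarith

lemma IsEnvelope.L_eq (h : IsEnvelope ω k c) (p : ℕ) :
    L ω p = L (Eword k) p + c := by
  have hne : Nat.nth (DOccursAt ω) (p - 1) ≠ 0 := fun h0 =>
    absurd (h0 ▸ Nat.nth_mem_of_infinite h.infinite_setOf_DOccursAt (p - 1)).1 (by omega)
  have hlt : ∀ i < c, ¬ DOccursAt ω i := fun i hi hω => by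
    obtain ⟨i, rfl⟩ : ∃ i', i = i' + 1 := ⟨i - 1, by have := hω.1; omega⟩
    obtain ⟨j, -, hj⟩ := (h.2 i).1 (DOccursAt_succ_iff.1 hω)
    omega
  rw [L, L, ← Nat.nth_add hlt hne]
  congr 2
  ext i
  exact h.DOccursAt_add_iff i

end Envelope

end PeriodDoubling

theorem strong_envelope_extension_general (ω : List Letter) (hfac : FactorD ω) (hne : ω ≠ [])
    (μ1 μ2 : List Letter) (hsplit : Env ω = μ1 ++ ω ++ μ2) (p : ℕ) :
    L ω p = L (Env ω) p + μ1.length := by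
  obtain ⟨i, hi⟩ := hfac
  obtain ⟨j, rfl⟩ : ∃ j, i = j + 1 := ⟨i - 1, by have := hi.1; omega⟩
  obtain ⟨k, c, h⟩ :=
    PeriodDoubling.exists_isEnvelope hne ⟨j, PeriodDoubling.DOccursAt_succ_iff.1 hi⟩
  have hμ : μ1.length = c :=
    h.eq_of_occursAt (h.env_eq ▸ hsplit ▸ PeriodDoubling.occursAt_middle μ1 ω μ2)
  rw [h.env_eq, hμ, h.L_eq]

/-- Let ω be a (nonempty) factor of D with Env(ω) = μ₁ ω μ₂ (the
factorization given by the unique occurrence of ω in Env(ω)). Then for every p ≥ 1,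
L(ω,p) = L(Env(ω),p) + |μ₁|, i.e. the p-th occurrence of Env(ω) in D contains the
p-th occurrence of ω with the same offset (Env(ω_p) = Env(ω)_p). -/
theorem strong_envelope_extension (ω : List Letter) (hfac : FactorD ω) (hne : ω ≠ [])
    (μ1 μ2 : List Letter) (hsplit : Env ω = μ1 ++ ω ++ μ2) (p : ℕ) (hp : 1 ≤ p) :
    L ω p = L (Env ω) p + μ1.length :=
  strong_envelope_extension_general ω hfac hne μ1 μ2 hsplit p
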